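/- Let ℓ ≥ 1 and let u be a pre-gelation solution of the coagulation-with-emission equations on [0,T]. Then the first moment satisfies m₁(t) = m₁(0) − ℓ t for all t ∈ [0,T]. -/

import Mathlib

open Finset Filter Topology

noncomputable section

/-- Total reaction probability mass
`M(t) = ∑_{m,n ≥ 1, m+n ≥ ℓ+1} m n u_m(t) u_n(t)`. -/
def Mfun (ℓ : ℕ) (u : ℕ → ℝ → ℝ) (t : ℝ) : ℝ :=
  ∑' p : ℕ × ℕ,
    if 1 ≤ p.1 ∧ 1 ≤ p.2 ∧ ℓ + 1 ≤ p.1 + p.2 then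
      (p.1 : ℝ) * (p.2 : ℝ) * u p.1 t * u p.2 t
    else 0

/-- Right-hand side of the coagulation-with-emission equation for `u n`:
`(1/M)[∑_{i=1}^{n+ℓ−1} i(n+ℓ−i) u_i u_{n+ℓ−i} − 2 n u_n ∑_{i ≥ max(1, ℓ−n+1)} i u_i]`. -/
def coagRHS (ℓ : ℕ) (u : ℕ → ℝ → ℝ) (n : ℕ) (t : ℝ) : ℝ :=
  (1 / Mfun ℓ u t) *
    ((∑ i ∈ Finset.Icc 1 (n + ℓ - 1),
        (i : ℝ) * ((n + ℓ - i : ℕ) : ℝ) * u i t * u (n + ℓ - i) t)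
      - 2 * (n : ℝ) * u n t *
          (∑' i : ℕ, if max 1 (ℓ + 1 - n) ≤ i then (i : ℝ) * u i t else 0))

/-- `u` is a (C¹) solution of the coagulation-with-emission equations on `[0,T]`,
with `M > 0` on `[0,T]` and nonnegative initial data summing to `1`. -/
structure IsCoagSolution (ℓ : ℕ) (T : ℝ) (u : ℕ → ℝ → ℝ) : Prop where
  contDiff : ∀ n, 1 ≤ n → ContDiffOn ℝ 1 (u n) (Set.Icc 0 T)
  Msummable : ∀ t ∈ Set.Icc (0 : ℝ) T,
    Summable (fun p : ℕ × ℕ =>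
      if 1 ≤ p.1 ∧ 1 ≤ p.2 ∧ ℓ + 1 ≤ p.1 + p.2 then
        (p.1 : ℝ) * (p.2 : ℝ) * u p.1 t * u p.2 t
      else 0)
  Mpos : ∀ t ∈ Set.Icc (0 : ℝ) T, 0 < Mfun ℓ u t
  ode : ∀ n, 1 ≤ n → ∀ t ∈ Set.Icc (0 : ℝ) T,
    HasDerivWithinAt (u n) (coagRHS ℓ u n t) (Set.Icc 0 T) t
  init_nonneg : ∀ n, 1 ≤ n → 0 ≤ u n 0
  init_sum : HasSum (fun i : ℕ => if 1 ≤ i then u i 0 else 0) 1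

/-- A finite mass solution: a nonnegative solution whose first-moment series
`m₁(t) = ∑_{i ≥ 1} i u_i(t)` converges uniformly on `[0,T]`. -/
structure IsFiniteMassSolution (ℓ : ℕ) (T : ℝ) (u : ℕ → ℝ → ℝ)
    extends IsCoagSolution ℓ T u : Prop where
  nonneg : ∀ n, 1 ≤ n → ∀ t ∈ Set.Icc (0 : ℝ) T, 0 ≤ u n t
  m1_unif : TendstoUniformlyOn
    (fun N t => ∑ i ∈ Finset.range N, (i : ℝ) * u i t)
    (fun t => ∑' i : ℕ, (i : ℝ) * u i t) atTop (Set.Icc 0 T)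

/-- The `k`-th moment `m_k(t) = ∑_{i ≥ 1} i^k u_i(t)`. -/
def moment (u : ℕ → ℝ → ℝ) (k : ℕ) (t : ℝ) : ℝ :=
  ∑' i : ℕ, if 1 ≤ i then (i : ℝ) ^ k * u i t else 0

/-- A pre-gelation solution: a finite mass solution whose second-moment series
`m₂(t) = ∑_{i ≥ 1} i² u_i(t)` converges uniformly on `[0,T]`. -/
structure IsPreGelationSolution (ℓ : ℕ) (T : ℝ) (u : ℕ → ℝ → ℝ)
    extends IsFiniteMassSolution ℓ T u : Prop where
  m2_unif : TendstoUniformlyOn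
    (fun N t => ∑ i ∈ Finset.range N, (i : ℝ) ^ 2 * u i t)
    (fun t => ∑' i : ℕ, (i : ℝ) ^ 2 * u i t) atTop (Set.Icc 0 T)

/-!
Write `b i = i² u_i` and `w(i,j) = i j u_i u_j` for the summands of `m₂` and `M`. The time
derivative of the truncated first moment `∑_{n<N} n u_n` is `1/M` times a sum of `w(i,j)` with
weights `i + j - ℓ` (gain, for `i + j < N + ℓ`) and `-2i` (loss, for `i < N`). Without the
truncations the weights sum to `-ℓ M`, because `∑ (i - j) w(i,j) = 0` by the symmetry `i ↔ j`.
The truncation error lives outside `[0, N/2)²`, where it is at most `2 b_i b_j`, so it is bounded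
by `4 m₂ (m₂ - ∑_{i<N/2} b_i)`. Since `m₂` converges uniformly and `M` is continuous and positive
on `[0,T]`, the derivatives converge uniformly to `-ℓ`, and the mean value inequality passes this to
the limit `m₁`.
-/

theorem hasSum_ite_mem_zero_mul {α : Type*} [DecidableEq α] {f : α → ℝ} (hf : Summable f)
    (hf₀ : 0 ≤ f) (S : Finset (α × α)) :
    HasSum (fun p => if p ∈ S then 0 else f p.1 * f p.2)
      ((∑' i, f i) ^ 2 - ∑ p ∈ S, f p.1 * f p.2) := by
  have hff := hf.mul_of_nonneg hf hf₀ hf₀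
  have hS : HasSum (fun p => if p ∈ S then f p.1 * f p.2 else 0) (∑ p ∈ S, f p.1 * f p.2) := by
    have h := hasSum_sum_of_ne_finset_zero (L := SummationFilter.unconditional _)
      (f := fun p => if p ∈ S then f p.1 * f p.2 else 0) (s := S) fun p hp => if_neg hp
    rwa [sum_congr rfl fun p hp => if_pos hp] at h
  rw [sq, hf.tsum_mul_tsum hf hff]
  refine (hff.hasSum.sub hS).congr_fun fun p => ?_
  split_ifs <;> ring

theorem eq_sub_mul_of_tendstoUniformlyOn_deriv {f f' : ℕ → ℝ → ℝ} {F : ℝ → ℝ} {a b c t : ℝ}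
    (hf : ∀ N, ∀ s ∈ Set.Icc a b, HasDerivWithinAt (f N) (f' N s) (Set.Icc a b) s)
    (hf' : TendstoUniformlyOn f' (fun _ => -c) atTop (Set.Icc a b))
    (hFa : Tendsto (fun N => f N a) atTop (𝓝 (F a)))
    (hFt : Tendsto (fun N => f N t) atTop (𝓝 (F t))) (ht : t ∈ Set.Icc a b) :
    F t = F a - c * (t - a) := by
  have ha : a ∈ Set.Icc a b := ⟨le_rfl, ht.1.trans ht.2⟩
  have hlim := (hFt.add_const (c * t)).sub (hFa.add_const (c * a))
  suffices Tendsto (fun N => f N t + c * t - (f N a + c * a)) atTop (𝓝 0) by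
    linarith [tendsto_nhds_unique hlim this]
  rw [Metric.tendsto_nhds]
  intro ε hε
  filter_upwards [Metric.tendstoUniformlyOn_iff.mp hf' (ε / (t - a + 1))
    (div_pos hε (by linarith [ht.1]))] with N hN
  have hmvt := (convex_Icc a b).norm_image_sub_le_of_norm_hasDerivWithin_le
    (f := fun s => f N s + c * s) (f' := fun s => f' N s + c)
    (fun s hs => (hf N s hs).add ((hasDerivWithinAt_id s _).const_mul c |>.congr_deriv (mul_one c)))
    (fun s hs => by rw [← sub_neg_eq_add, ← dist_eq_norm, dist_comm]; exact (hN s hs).le) ha ht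
  rw [dist_zero_right]
  refine hmvt.trans_lt ?_
  rw [Real.norm_eq_abs, abs_of_nonneg (sub_nonneg.mpr ht.1), div_mul_eq_mul_div,
    div_lt_iff₀ (by linarith [ht.1])]
  nlinarith

namespace Coagulation

variable {ℓ : ℕ} {v : ℕ → ℝ}

/- The pieces of `Mfun` and `coagRHS` for a size distribution `v = (u · t)` at a fixed time:
`Mfun ℓ u t = ∑' p, pairWeight ℓ (u · t) p` and
`coagRHS ℓ u n t = (1 / Mfun ℓ u t) * (gainSum ℓ (u · t) n - 2 n u_n(t) lossSum ℓ (u · t) n)`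
hold by definition. -/
def pairWeight (ℓ : ℕ) (v : ℕ → ℝ) (p : ℕ × ℕ) : ℝ :=
  if 1 ≤ p.1 ∧ 1 ≤ p.2 ∧ ℓ + 1 ≤ p.1 + p.2 then (p.1 : ℝ) * (p.2 : ℝ) * v p.1 * v p.2 else 0

def gainSum (ℓ : ℕ) (v : ℕ → ℝ) (n : ℕ) : ℝ :=
  ∑ i ∈ Icc 1 (n + ℓ - 1), (i : ℝ) * ((n + ℓ - i : ℕ) : ℝ) * v i * v (n + ℓ - i)

def lossSum (ℓ : ℕ) (v : ℕ → ℝ) (n : ℕ) : ℝ :=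
  ∑' i : ℕ, if max 1 (ℓ + 1 - n) ≤ i then (i : ℝ) * v i else 0

lemma natCast_mul_nonneg (hv : ∀ i, 1 ≤ i → 0 ≤ v i) (i : ℕ) : 0 ≤ (i : ℝ) * v i := by
  rcases i with _ | i
  · simp
  · exact mul_nonneg i.succ.cast_nonneg (hv _ i.succ_pos)

lemma natCast_sq_mul_nonneg (hv : ∀ i, 1 ≤ i → 0 ≤ v i) (i : ℕ) : 0 ≤ (i : ℝ) ^ 2 * v i := by
  rw [sq, mul_assoc]
  exact mul_nonneg i.cast_nonneg (natCast_mul_nonneg hv i)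

lemma summable_natCast_mul (hv : ∀ i, 1 ≤ i → 0 ≤ v i)
    (hb : Summable fun i : ℕ => (i : ℝ) ^ 2 * v i) : Summable fun i : ℕ => (i : ℝ) * v i :=
  hb.of_nonneg_of_le (natCast_mul_nonneg hv) fun i => by
    rcases i with _ | i
    · simp
    · rw [sq, mul_assoc]
      exact le_mul_of_one_le_left (natCast_mul_nonneg hv _) (by simp)

lemma pairWeight_swap (p : ℕ × ℕ) : pairWeight ℓ v p.swap = pairWeight ℓ v p := by
  unfold pairWeight
  by_cases h : 1 ≤ p.1 ∧ 1 ≤ p.2 ∧ ℓ + 1 ≤ p.1 + p.2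
  · rw [if_pos h, if_pos (by simp only [Prod.fst_swap, Prod.snd_swap]; omega)]
    simp only [Prod.fst_swap, Prod.snd_swap]
    ring
  · rw [if_neg h, if_neg (by simp only [Prod.fst_swap, Prod.snd_swap]; omega)]

lemma abs_mul_pairWeight_le (hv : ∀ i, 1 ≤ i → 0 ≤ v i) {c C : ℝ} (hC : 0 ≤ C) {p : ℕ × ℕ}
    (hc : 1 ≤ (p.1 : ℝ) → 1 ≤ (p.2 : ℝ) → (ℓ : ℝ) + 1 ≤ p.1 + p.2 → |c| ≤ C * (p.1 * p.2)) :
    |c * pairWeight ℓ v p| ≤ C * ((p.1 : ℝ) ^ 2 * v p.1 * ((p.2 : ℝ) ^ 2 * v p.2)) := by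
  unfold pairWeight
  split_ifs with h
  · obtain ⟨h₁, h₂, h₃⟩ := h
    have hw : 0 ≤ (p.1 : ℝ) * p.2 * v p.1 * v p.2 := by
      have := hv _ h₁; have := hv _ h₂; positivity
    rw [abs_mul, abs_of_nonneg hw]
    calc |c| * ((p.1 : ℝ) * p.2 * v p.1 * v p.2)
        ≤ C * (p.1 * p.2) * ((p.1 : ℝ) * p.2 * v p.1 * v p.2) :=
          mul_le_mul_of_nonneg_right (hc (by exact_mod_cast h₁) (by exact_mod_cast h₂)
            (by exact_mod_cast h₃)) hw
      _ = _ := by ring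
  · have := natCast_sq_mul_nonneg hv p.1
    have := natCast_sq_mul_nonneg hv p.2
    simp only [mul_zero, abs_zero]
    positivity

lemma summable_mul_pairWeight (hv : ∀ i, 1 ≤ i → 0 ≤ v i)
    (hb : Summable fun i : ℕ => (i : ℝ) ^ 2 * v i) {c : ℕ × ℕ → ℝ} {C : ℝ} (hC : 0 ≤ C)
    (hc : ∀ p : ℕ × ℕ, 1 ≤ (p.1 : ℝ) → 1 ≤ (p.2 : ℝ) → (ℓ : ℝ) + 1 ≤ p.1 + p.2 →
      |c p| ≤ C * (p.1 * p.2)) :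
    Summable fun p => c p * pairWeight ℓ v p :=
  have hb₀ : 0 ≤ fun i : ℕ => (i : ℝ) ^ 2 * v i := natCast_sq_mul_nonneg hv
  ((hb.mul_of_nonneg hb hb₀ hb₀).mul_left C).of_norm_bounded
    fun p => abs_mul_pairWeight_le hv hC (hc p)

lemma tsum_sub_mul_pairWeight_eq_zero :
    ∑' p : ℕ × ℕ, ((p.1 : ℝ) - p.2) * pairWeight ℓ v p = 0 := by
  have h := (Equiv.prodComm ℕ ℕ).tsum_eq fun p => ((p.1 : ℝ) - p.2) * pairWeight ℓ v p
  have hswap : ∀ p : ℕ × ℕ, ((p.swap.1 : ℝ) - p.swap.2) * pairWeight ℓ v p.swap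
      = -(((p.1 : ℝ) - p.2) * pairWeight ℓ v p) := fun p => by
    rw [pairWeight_swap, Prod.fst_swap, Prod.snd_swap]; ring
  simp only [Equiv.prodComm_apply, hswap, tsum_neg] at h
  linarith

lemma sum_mul_gainSum (N : ℕ) :
    ∑ n ∈ range N, (n : ℝ) * gainSum ℓ v n
      = ∑' p : ℕ × ℕ,
          (if p.1 + p.2 < N + ℓ then (p.1 + p.2 - ℓ : ℝ) else 0) * pairWeight ℓ v p := by
  set S := (range (N + ℓ) ×ˢ range (N + ℓ)).filter
    fun p : ℕ × ℕ => 1 ≤ p.1 ∧ 1 ≤ p.2 ∧ ℓ ≤ p.1 + p.2 ∧ p.1 + p.2 < N + ℓ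
  have hS : ∀ p ∉ S,
      (if p.1 + p.2 < N + ℓ then (p.1 + p.2 - ℓ : ℝ) else 0) * pairWeight ℓ v p = 0 := by
    intro p hp
    simp only [S, mem_filter, mem_product, mem_range, not_and] at hp
    unfold pairWeight
    split_ifs <;> first | (exfalso; omega) | simp
  rw [tsum_eq_sum hS]
  simp only [gainSum, mul_sum]
  rw [sum_sigma']
  refine sum_nbij' (fun x => (x.2, x.1 + ℓ - x.2)) (fun p => ⟨p.1 + p.2 - ℓ, p.1⟩)
    ?_ ?_ ?_ ?_ ?_
  · rintro ⟨n, i⟩ h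
    simp only [mem_sigma, mem_range, mem_Icc] at h
    simp only [S, mem_filter, mem_product, mem_range]
    omega
  · rintro ⟨i, j⟩ h
    simp only [S, mem_filter, mem_product, mem_range] at h
    simp only [mem_sigma, mem_range, mem_Icc]
    omega
  · rintro ⟨n, i⟩ h
    simp only [mem_sigma, mem_range, mem_Icc] at h
    ext <;> simp
    omega
  · rintro ⟨i, j⟩ h
    simp only [S, mem_filter, mem_product, mem_range] at h
    ext <;> simp
    omega
  · rintro ⟨n, i⟩ h
    simp only [mem_sigma, mem_range, mem_Icc] at h
    have hn : ((i + (n + ℓ - i) : ℕ) : ℝ) = n + ℓ := by norm_cast; omega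
    push_cast at hn
    simp only [pairWeight, if_pos (show i + (n + ℓ - i) < N + ℓ by omega), hn]
    rcases Nat.eq_zero_or_pos n with rfl | hn₀
    · simp
    · rw [if_pos (by omega)]
      ring

lemma sum_mul_lossSum (hv : ∀ i, 1 ≤ i → 0 ≤ v i)
    (hb : Summable fun i : ℕ => (i : ℝ) ^ 2 * v i) (N : ℕ) :
    ∑ n ∈ range N, (n : ℝ) * (n * v n * lossSum ℓ v n)
      = ∑' p : ℕ × ℕ, (if p.1 < N then (p.1 : ℝ) else 0) * pairWeight ℓ v p := by
  have hsum := summable_mul_pairWeight (ℓ := ℓ) hv hb zero_le_one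
    (c := fun p => if p.1 < N then (p.1 : ℝ) else 0) fun p h₁ h₂ _ => by
      split_ifs <;> rw [abs_le] <;> constructor <;> nlinarith
  rw [hsum.tsum_prod' hsum.prod_factor, tsum_eq_sum (s := range N) fun n hn => by
    simp [if_neg (mt mem_range.mpr hn)]]
  refine sum_congr rfl fun n hn => ?_
  simp only [if_pos (mem_range.mp hn)]
  rw [lossSum, ← mul_assoc, ← tsum_mul_left]
  refine tsum_congr fun i => ?_
  rcases Nat.eq_zero_or_pos n with rfl | hn₀
  · simp
  · simp only [pairWeight, max_le_iff]
    by_cases h : 1 ≤ i ∧ ℓ + 1 - n ≤ i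
    · rw [if_pos h, if_pos (by omega)]
      ring
    · rw [if_neg h, if_neg (by omega)]
      simp

/- The weights of `pairWeight` that the truncation at `N` removes from the loss term (`2 i`, for
`N ≤ i`) and from the gain term (`i + j - ℓ`, for `N + ℓ ≤ i + j`). -/
def truncationWeight (ℓ N : ℕ) (p : ℕ × ℕ) : ℝ :=
  (if N ≤ p.1 then 2 * (p.1 : ℝ) else 0) - if N + ℓ ≤ p.1 + p.2 then (p.1 + p.2 - ℓ : ℝ) else 0

lemma hasSum_truncationWeight_mul_pairWeight (hv : ∀ i, 1 ≤ i → 0 ≤ v i)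
    (hb : Summable fun i : ℕ => (i : ℝ) ^ 2 * v i) (N : ℕ) :
    HasSum (fun p => truncationWeight ℓ N p * pairWeight ℓ v p)
      (∑ n ∈ range N, (n : ℝ) * (gainSum ℓ v n - 2 * n * v n * lossSum ℓ v n)
        + ℓ * ∑' p, pairWeight ℓ v p) := by
  have hG := summable_mul_pairWeight hv hb zero_le_two
    (c := fun p => if p.1 + p.2 < N + ℓ then (p.1 + p.2 - ℓ : ℝ) else 0) fun p h₁ h₂ h₃ => by
      split_ifs <;> rw [abs_le] <;> constructor <;> nlinarith
  have hL := summable_mul_pairWeight (ℓ := ℓ) hv hb zero_le_one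
    (c := fun p => if p.1 < N then (p.1 : ℝ) else 0) fun p h₁ h₂ h₃ => by
      split_ifs <;> rw [abs_le] <;> constructor <;> nlinarith
  have hW : Summable (pairWeight ℓ v) := by
    simpa using summable_mul_pairWeight hv hb zero_le_one (c := fun _ => 1) fun p h₁ h₂ h₃ => by
      rw [abs_one]; nlinarith
  have hD := summable_mul_pairWeight (ℓ := ℓ) hv hb zero_le_one
    (c := fun p => (p.1 : ℝ) - p.2) fun p h₁ h₂ h₃ => by
      rw [abs_le]; constructor <;> nlinarith
  -- Adding `∑ (i - j) w(i,j) = 0` cancels the untruncated weights `(i + j - ℓ) - 2 i + ℓ`.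
  have h := ((hG.hasSum.sub (hL.hasSum.mul_left 2)).add (hW.hasSum.mul_left (ℓ : ℝ))).add
    hD.hasSum
  rw [tsum_sub_mul_pairWeight_eq_zero, add_zero, ← sum_mul_gainSum, ← sum_mul_lossSum hv hb,
    mul_sum, ← sum_sub_distrib] at h
  rw [show ∑ n ∈ range N, (n : ℝ) * (gainSum ℓ v n - 2 * n * v n * lossSum ℓ v n)
      = ∑ n ∈ range N, ((n : ℝ) * gainSum ℓ v n - 2 * (n * (n * v n * lossSum ℓ v n))) from
    sum_congr rfl fun n _ => by ring]
  refine h.congr_fun fun p => ?_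
  simp only [truncationWeight]
  split_ifs <;> first | omega | ring

lemma abs_truncationWeight_mul_pairWeight_le (hv : ∀ i, 1 ≤ i → 0 ≤ v i) {K N : ℕ}
    (hKN : 2 * K ≤ N) (p : ℕ × ℕ) :
    |truncationWeight ℓ N p * pairWeight ℓ v p| ≤ 2 * (if p ∈ range K ×ˢ range K then 0
      else (p.1 : ℝ) ^ 2 * v p.1 * ((p.2 : ℝ) ^ 2 * v p.2)) := by
  by_cases hp : p ∈ range K ×ˢ range K
  · rw [if_pos hp]
    simp only [mem_product, mem_range] at hp
    simp [truncationWeight, if_neg (show ¬N ≤ p.1 by omega),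
      if_neg (show ¬N + ℓ ≤ p.1 + p.2 by omega)]
  · rw [if_neg hp]
    refine abs_mul_pairWeight_le hv zero_le_two fun h₁ h₂ h₃ => ?_
    simp only [truncationWeight]
    split_ifs <;> rw [abs_le] <;> constructor <;> nlinarith

theorem abs_sum_mul_gain_sub_loss_add_le (hv : ∀ i, 1 ≤ i → 0 ≤ v i)
    (hb : Summable fun i : ℕ => (i : ℝ) ^ 2 * v i) {K N : ℕ} (hKN : 2 * K ≤ N) :
    |∑ n ∈ range N, (n : ℝ) * (gainSum ℓ v n - 2 * n * v n * lossSum ℓ v n)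
        + ℓ * ∑' p, pairWeight ℓ v p|
      ≤ 4 * (∑' i : ℕ, (i : ℝ) ^ 2 * v i)
          * ((∑' i : ℕ, (i : ℝ) ^ 2 * v i) - ∑ i ∈ range K, (i : ℝ) ^ 2 * v i) := by
  have hb₀ : 0 ≤ fun i : ℕ => (i : ℝ) ^ 2 * v i := natCast_sq_mul_nonneg hv
  have h := tsum_of_norm_bounded (f := fun p => truncationWeight ℓ N p * pairWeight ℓ v p)
    ((hasSum_ite_mem_zero_mul hb hb₀ (range K ×ˢ range K)).mul_left 2)
    (abs_truncationWeight_mul_pairWeight_le (ℓ := ℓ) hv hKN)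
  have hbox : ∑ p ∈ range K ×ˢ range K, (p.1 : ℝ) ^ 2 * v p.1 * ((p.2 : ℝ) ^ 2 * v p.2)
      = (∑ i ∈ range K, (i : ℝ) ^ 2 * v i) ^ 2 := by
    rw [sq, sum_mul_sum, sum_product]
  rw [(hasSum_truncationWeight_mul_pairWeight hv hb N).tsum_eq, Real.norm_eq_abs, hbox] at h
  have hK : ∑ i ∈ range K, (i : ℝ) ^ 2 * v i ≤ ∑' i : ℕ, (i : ℝ) ^ 2 * v i :=
    hb.sum_le_tsum _ fun i _ => hb₀ i
  have hK₀ : 0 ≤ ∑ i ∈ range K, (i : ℝ) ^ 2 * v i := sum_nonneg fun i _ => hb₀ i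
  nlinarith

lemma tsum_pairWeight_eq (hv : ∀ i, 1 ≤ i → 0 ≤ v i)
    (ha : Summable fun i : ℕ => (i : ℝ) * v i) :
    ∑' p, pairWeight ℓ v p = (∑' i : ℕ, (i : ℝ) * v i) ^ 2
      - ∑ p ∈ (range (ℓ + 1) ×ˢ range (ℓ + 1)).filter (fun p => p.1 + p.2 ≤ ℓ),
          (p.1 : ℝ) * v p.1 * ((p.2 : ℝ) * v p.2) := by
  rw [← (hasSum_ite_mem_zero_mul ha (natCast_mul_nonneg hv) _).tsum_eq]
  refine tsum_congr fun p => ?_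
  simp only [pairWeight, mem_filter, mem_product, mem_range]
  split_ifs with h₁ h₂ h₂
  · omega
  · ring
  · rfl
  · obtain h | h : p.1 = 0 ∨ p.2 = 0 := by omega
    all_goals simp [h]

end Coagulation

section Solution

open Coagulation

variable {ℓ : ℕ} {T : ℝ} {u : ℕ → ℝ → ℝ}

lemma IsCoagSolution.continuousOn_mul (hu : IsCoagSolution ℓ T u) {c : ℕ → ℝ} (hc : c 0 = 0)
    (i : ℕ) : ContinuousOn (fun s => c i * u i s) (Set.Icc 0 T) := by
  rcases i with _ | i
  · simpa [hc] using continuousOn_const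
  · exact continuousOn_const.mul (hu.contDiff _ i.succ_pos).continuousOn

lemma IsCoagSolution.hasDerivWithinAt_mul (hu : IsCoagSolution ℓ T u) {c : ℕ → ℝ} (hc : c 0 = 0)
    (i : ℕ) {s : ℝ} (hs : s ∈ Set.Icc 0 T) :
    HasDerivWithinAt (fun s => c i * u i s) (c i * coagRHS ℓ u i s) (Set.Icc 0 T) s := by
  rcases i with _ | i
  · simpa [hc] using hasDerivWithinAt_const s (Set.Icc 0 T) (0 : ℝ)
  · exact (hu.ode _ i.succ_pos s hs).const_mul _

lemma IsPreGelationSolution.summable_sq_mul (hu : IsPreGelationSolution ℓ T u) {s : ℝ}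
    (hs : s ∈ Set.Icc 0 T) : Summable fun i : ℕ => (i : ℝ) ^ 2 * u i s :=
  ((hasSum_iff_tendsto_nat_of_nonneg
    (natCast_sq_mul_nonneg fun i hi => hu.nonneg i hi s hs) _).mpr
      (hu.m2_unif.tendsto_at hs)).summable

lemma IsPreGelationSolution.continuousOn_Mfun (hu : IsPreGelationSolution ℓ T u) :
    ContinuousOn (Mfun ℓ u) (Set.Icc 0 T) := by
  have hm₁ : ContinuousOn (fun s => ∑' i : ℕ, (i : ℝ) * u i s) (Set.Icc 0 T) :=
    hu.m1_unif.continuousOn (Eventually.of_forall fun N =>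
      continuousOn_finsetSum _ fun i _ => hu.continuousOn_mul Nat.cast_zero i).frequently
  refine ContinuousOn.congr (f := fun s => (∑' i : ℕ, (i : ℝ) * u i s) ^ 2
      - ∑ p ∈ (range (ℓ + 1) ×ˢ range (ℓ + 1)).filter (fun p => p.1 + p.2 ≤ ℓ),
          (p.1 : ℝ) * u p.1 s * ((p.2 : ℝ) * u p.2 s))
    ((hm₁.pow 2).sub (continuousOn_finsetSum _ fun p _ =>
      (hu.continuousOn_mul Nat.cast_zero p.1).mul (hu.continuousOn_mul Nat.cast_zero p.2)))
    fun s hs => ?_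
  have hv : ∀ i, 1 ≤ i → 0 ≤ u i s := fun i hi => hu.nonneg i hi s hs
  exact tsum_pairWeight_eq hv (summable_natCast_mul hv (hu.summable_sq_mul hs))

lemma sum_mul_coagRHS_add {s : ℝ} (hM : Mfun ℓ u s ≠ 0) (N : ℕ) :
    ∑ n ∈ range N, (n : ℝ) * coagRHS ℓ u n s + ℓ = (Mfun ℓ u s)⁻¹ *
      (∑ n ∈ range N, (n : ℝ) * (gainSum ℓ (fun i => u i s) n
        - 2 * n * u n s * lossSum ℓ (fun i => u i s) n) + ℓ * Mfun ℓ u s) := by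
  rw [mul_add, mul_sum, mul_left_comm, inv_mul_cancel₀ hM, mul_one]
  exact congrArg (· + _) (sum_congr rfl fun n _ => by simp only [coagRHS, gainSum, lossSum]; ring)

lemma IsPreGelationSolution.abs_sum_mul_coagRHS_add_le (hu : IsPreGelationSolution ℓ T u)
    {s : ℝ} (hs : s ∈ Set.Icc 0 T) {K N : ℕ} (hKN : 2 * K ≤ N) :
    |∑ n ∈ range N, (n : ℝ) * coagRHS ℓ u n s + ℓ|
      ≤ (Mfun ℓ u s)⁻¹ * (4 * (∑' i : ℕ, (i : ℝ) ^ 2 * u i s)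
          * ((∑' i : ℕ, (i : ℝ) ^ 2 * u i s) - ∑ i ∈ range K, (i : ℝ) ^ 2 * u i s)) := by
  have hM := hu.Mpos s hs
  rw [sum_mul_coagRHS_add hM.ne', abs_mul, abs_of_pos (inv_pos.mpr hM)]
  exact mul_le_mul_of_nonneg_left
    (abs_sum_mul_gain_sub_loss_add_le (fun i hi => hu.nonneg i hi s hs) (hu.summable_sq_mul hs) hKN)
    (inv_nonneg.mpr hM.le)

theorem IsPreGelationSolution.tendstoUniformlyOn_sum_mul_coagRHS
    (hu : IsPreGelationSolution ℓ T u) :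
    TendstoUniformlyOn (fun N s => ∑ n ∈ range N, (n : ℝ) * coagRHS ℓ u n s)
      (fun _ => -(ℓ : ℝ)) atTop (Set.Icc 0 T) := by
  obtain ⟨A, hA⟩ := isCompact_Icc.exists_bound_of_continuousOn
    (hu.continuousOn_Mfun.inv₀ fun s hs => (hu.Mpos s hs).ne')
  obtain ⟨B, hB⟩ := isCompact_Icc.exists_bound_of_continuousOn
    (hu.m2_unif.continuousOn (Eventually.of_forall fun N => continuousOn_finsetSum _
      fun i _ => hu.continuousOn_mul (c := fun i => (i : ℝ) ^ 2) (by simp) i).frequently)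
  rw [Metric.tendstoUniformlyOn_iff]
  intro ε hε
  have hη : 0 < ε / (4 * |A| * |B| + 1) := by positivity
  obtain ⟨K, hK⟩ := eventually_atTop.mp (Metric.tendstoUniformlyOn_iff.mp hu.m2_unif _ hη)
  refine eventually_atTop.mpr ⟨2 * K, fun N hN s hs => ?_⟩
  have hb₀ := natCast_sq_mul_nonneg fun i hi => hu.nonneg i hi s hs
  have hm₂ : 0 ≤ ∑' i : ℕ, (i : ℝ) ^ 2 * u i s := tsum_nonneg hb₀
  have hm₂B : ∑' i : ℕ, (i : ℝ) ^ 2 * u i s ≤ |B| :=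
    (le_abs_self _).trans ((hB s hs).trans (le_abs_self B))
  have htail₀ : 0 ≤ (∑' i : ℕ, (i : ℝ) ^ 2 * u i s) - ∑ i ∈ range K, (i : ℝ) ^ 2 * u i s :=
    sub_nonneg.mpr ((hu.summable_sq_mul hs).sum_le_tsum _ fun i _ => hb₀ i)
  have htail : (∑' i : ℕ, (i : ℝ) ^ 2 * u i s) - ∑ i ∈ range K, (i : ℝ) ^ 2 * u i s
      ≤ ε / (4 * |A| * |B| + 1) :=
    (le_abs_self _).trans (hK K le_rfl s hs).le
  rw [dist_comm, Real.dist_eq, sub_neg_eq_add]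
  calc _ ≤ _ := hu.abs_sum_mul_coagRHS_add_le hs hN
    _ ≤ |A| * (4 * |B| * (ε / (4 * |A| * |B| + 1))) :=
      mul_le_mul ((le_abs_self _).trans ((hA s hs).trans (le_abs_self A)))
        (mul_le_mul (by linarith) htail htail₀ (by positivity)) (by positivity) (abs_nonneg A)
    _ = ε * (4 * |A| * |B| / (4 * |A| * |B| + 1)) := by ring
    _ < ε := mul_lt_of_lt_one_right hε ((div_lt_one (by positivity)).mpr (lt_add_one _))

end Solution

theorem first_moment_loss (ℓ : ℕ) (T : ℝ)
    (u : ℕ → ℝ → ℝ) (hu : IsPreGelationSolution ℓ T u) :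
    ∀ t ∈ Set.Icc (0 : ℝ) T, moment u 1 t = moment u 1 0 - (ℓ : ℝ) * t := by
  intro t ht
  have hmoment (s : ℝ) : moment u 1 s = ∑' i : ℕ, (i : ℝ) * u i s :=
    tsum_congr fun i => by rcases i with _ | i <;> simp
  rw [hmoment, hmoment]
  simpa only [sub_zero] using
    eq_sub_mul_of_tendstoUniformlyOn_deriv (F := fun s => ∑' i : ℕ, (i : ℝ) * u i s)
    (fun N s hs => HasDerivWithinAt.fun_sum fun i _ =>
      hu.hasDerivWithinAt_mul Nat.cast_zero i hs)
    hu.tendstoUniformlyOn_sum_mul_coagRHS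
    (hu.m1_unif.tendsto_at ⟨le_rfl, ht.1.trans ht.2⟩) (hu.m1_unif.tendsto_at ht) ht
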